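/- arXiv:2403.00719 — 2 statements merged into one kernel-verified Lean document; each statement's English description precedes it below -/
import Mathlib

section
/- Let h : ℂ → ℂ be C¹ with compact support and set hₜ(x) = x + t·h(x). Then as t → 0, the inverse map satisfies hₜ⁻¹(x) = x − t·h(x) + o(t), uniformly in x ∈ ℂ, for all sufficiently small |t| (for which hₜ is a bijection of ℂ). -/
/-! Being `C¹` with compact support, `h` is `L`-Lipschitz and bounded by `M`, so for `|t| L < 1`
the map `y ↦ x - t h y` is a contraction and its fixed point is `hₜ⁻¹ x`. For that `y`,
`y - (x - t h x) = t (h x - h y)` has norm at most `|t| L ‖x - y‖ = |t| L ‖t h y‖ ≤ L M t²`. -/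

open Filter Topology

namespace LipschitzWith

variable {E : Type*} [NormedAddCommGroup E] {g : E → E} {K : NNReal}

theorem injective_id_add (hg : LipschitzWith K g) (hK : K < 1) :
    Function.Injective fun x => x + g x :=
  (AntilipschitzWith.id.add_lipschitzWith hg (by simpa using hK)).injective

theorem surjective_id_add [CompleteSpace E] (hg : LipschitzWith K g) (hK : K < 1) :
    Function.Surjective fun x => x + g x := by
  intro x
  have hcontr : ContractingWith K fun y => x - g y :=
    ⟨hK, by simpa using (LipschitzWith.const x).sub hg⟩
  obtain ⟨y, hy, -⟩ := hcontr.exists_fixedPoint 0 (edist_ne_top _ _)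
  exact ⟨y, (sub_eq_iff_eq_add.mp hy).symm⟩

theorem bijective_id_add [CompleteSpace E] (hg : LipschitzWith K g) (hK : K < 1) :
    Function.Bijective fun x => x + g x :=
  ⟨hg.injective_id_add hK, hg.surjective_id_add hK⟩

theorem norm_invFun_id_add_sub_le [CompleteSpace E] (hg : LipschitzWith K g) (hK : K < 1)
    {M : ℝ} (hM : ∀ y, ‖g y‖ ≤ M) (x : E) :
    ‖Function.invFun (fun x => x + g x) x - (x - g x)‖ ≤ K * M := by
  set y := Function.invFun (fun x => x + g x) x
  have hy : y + g y = x := Function.invFun_eq (hg.surjective_id_add hK x)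
  calc ‖y - (x - g x)‖ = ‖g x - g y‖ := by rw [← hy]; congr 1; abel
    _ ≤ K * ‖x - y‖ := hg.norm_sub_le x y
    _ = K * ‖g y‖ := by rw [← hy, add_sub_cancel_left]
    _ ≤ K * M := by gcongr; exact hM y

end LipschitzWith

/-- For `h : ℂ → ℂ` of class `C¹` with compact support and `hₜ(x) = x + t·h(x)`,
as `t → 0` the map `hₜ` is a bijection of `ℂ` and its inverse satisfies
`hₜ⁻¹(x) = x − t·h(x) + o(t)`, uniformly in `x`. -/
theorem inverse_perturbation_expansion (h : ℂ → ℂ)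
    (hC1 : ContDiff ℝ 1 h) (hsupp : HasCompactSupport h) :
    ∀ ε : ℝ, 0 < ε → ∃ δ : ℝ, 0 < δ ∧ ∀ t : ℝ, |t| < δ →
      Function.Bijective (fun x : ℂ => x + (t : ℂ) * h x) ∧
      ∀ x : ℂ,
        ‖Function.invFun (fun x : ℂ => x + (t : ℂ) * h x) x -
          (x - (t : ℂ) * h x)‖ ≤ ε * |t| := by
  obtain ⟨L, hL⟩ := hC1.lipschitzWith_of_hasCompactSupport hsupp one_ne_zero
  obtain ⟨M, hM⟩ := hsupp.exists_bound_of_continuous hC1.continuous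
  intro ε hε
  have habs : Tendsto (fun t : ℝ => |t|) (𝓝 0) (𝓝 0) := continuous_abs.tendsto' 0 0 abs_zero
  have hsmall : ∀ᶠ t in 𝓝 (0 : ℝ), |t| * (L : ℝ) < 1 ∧ |t| * (L * M) < ε :=
    ((habs.mul_const _).eventually (gt_mem_nhds (by simp))).and
      ((habs.mul_const _).eventually (gt_mem_nhds (by simpa using hε)))
  obtain ⟨δ, hδ, hδt⟩ := Metric.eventually_nhds_iff.mp hsmall
  refine ⟨δ, hδ, fun t ht => ?_⟩
  obtain ⟨htL, htLM⟩ := hδt (by rwa [Real.dist_0_eq_abs])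
  have hnorm : ‖(t : ℂ)‖ = |t| := by simp
  have hLt : LipschitzWith (‖(t : ℂ)‖₊ * L) fun x => (t : ℂ) * h x :=
    (lipschitzWith_smul (t : ℂ)).comp hL
  have hK : ‖(t : ℂ)‖₊ * L < 1 := by rw [← NNReal.coe_lt_coe]; push_cast; rwa [hnorm]
  have hMt : ∀ y, ‖(t : ℂ) * h y‖ ≤ |t| * M := fun y => by
    rw [norm_mul, hnorm]; gcongr; exact hM y
  refine ⟨hLt.bijective_id_add hK, fun x => (hLt.norm_invFun_id_add_sub_le hK hMt x).trans ?_⟩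
  push_cast
  rw [hnorm]
  nlinarith [abs_nonneg t]
end

section
/- Let (μₙ) be Borel probability measures on ℂ converging vaguely to a finite Borel measure μ₀, and let h : ℂ → ℂ be C² with compact support, so that g(x,y) := (h(x)−h(y))/(x−y) (extended by the derivative on the diagonal in the sense of being continuous and bounded) satisfies: ∬ g dμₙ dμₙ → ∬ g dμ₀ dμ₀. -/
/-!
Vague convergence passes to products: on a compact set a compactly supported continuous `F` on
`X × Y` is uniformly approximated by sums of products `f x * k y` (Stone–Weierstrass), whose
integrals against `μᵢ ⊗ νᵢ` factor, and multiplying by a product cutoff `χX x * χY y` keeps the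
error below `ε * ∫ χX ⊗ χY`, which converges. For measures of bounded total mass, vague
convergence then extends to continuous functions vanishing at infinity, by cutting them off on a
large compact set. Finally `g` vanishes at infinity on `ℂ × ℂ`: it is zero when both coordinates
lie outside `tsupport h` (on the diagonal by continuity), and otherwise
`‖g (x, y)‖ ≤ 2 sup ‖h‖ / ‖x - y‖` with one of `x`, `y` confined to `tsupport h`.
-/

open MeasureTheory Filter Topology Set

section Approximation

variable {ι : Type*} {l : Filter ι}

theorem tendsto_of_forall_approx {E : Type*} [PseudoMetricSpace E] {u : ι → E} {a : E}
    {w : ι → ℝ} {c : ℝ} (hw : IsBoundedUnder (· ≤ ·) l w)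
    (happrox : ∀ ε > 0, ∃ v : ι → E, ∃ b, Tendsto v l (𝓝 b) ∧
      (∀ i, dist (u i) (v i) ≤ ε * w i) ∧ dist a b ≤ ε * c) :
    Tendsto u l (𝓝 a) := by
  obtain ⟨B, hB⟩ := hw
  rw [Metric.tendsto_nhds]
  intro ε hε
  set K := |B| + |c| + 1
  have hK : 0 < K := by positivity
  set δ := ε / (3 * K)
  obtain ⟨v, b, hvb, huv, hab⟩ := happrox δ (by positivity)
  filter_upwards [Metric.tendsto_nhds.1 hvb (ε / 3) (by positivity), hB] with i hvi hwi
  have hδ : δ * w i + δ * c < ε / 3 := by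
    calc δ * w i + δ * c ≤ δ * (|B| + |c|) := by
          rw [← mul_add]
          exact mul_le_mul_of_nonneg_left
            (add_le_add (hwi.trans (le_abs_self B)) (le_abs_self c)) (by positivity)
      _ < δ * K := by gcongr; linarith
      _ = ε / 3 := by simp only [δ]; field_simp
  calc dist (u i) a ≤ dist (u i) (v i) + dist (v i) b + dist b a := dist_triangle4 _ _ _ _
    _ < ε := by rw [dist_comm b a]; linarith [huv i]

theorem dist_integral_le_of_norm_sub_le {X E : Type*} [MeasurableSpace X] [NormedAddCommGroup E]
    [NormedSpace ℝ E] {μ : Measure X} {F G : X → E} {ψ : X → ℝ} {ε : ℝ}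
    (hF : Integrable F μ) (hG : Integrable G μ) (hψ : Integrable ψ μ)
    (hle : ∀ x, ‖F x - G x‖ ≤ ε * ψ x) :
    dist (∫ x, F x ∂μ) (∫ x, G x ∂μ) ≤ ε * ∫ x, ψ x ∂μ := by
  rw [dist_eq_norm, ← integral_sub hF hG, ← integral_const_mul]
  exact norm_integral_le_of_norm_le (hψ.const_mul ε) (ae_of_all _ hle)

end Approximation

section Vague

variable {ι X : Type*} [TopologicalSpace X] [MeasurableSpace X] {l : Filter ι}

def TendstoVaguely (μ : ι → Measure X) (l : Filter ι) (μ0 : Measure X) : Prop :=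
  ∀ f : X → ℝ, Continuous f → HasCompactSupport f →
    Tendsto (fun i => ∫ x, f x ∂μ i) l (𝓝 (∫ x, f x ∂μ0))

theorem TendstoVaguely.tendsto_integral_rclike {𝕜 : Type*} [RCLike 𝕜] [OpensMeasurableSpace X]
    {μ : ι → Measure X} {μ0 : Measure X} [∀ i, IsFiniteMeasureOnCompacts (μ i)]
    [IsFiniteMeasureOnCompacts μ0] (hμ : TendstoVaguely μ l μ0) {F : X → 𝕜}
    (hF : Continuous F) (hFs : HasCompactSupport F) :
    Tendsto (fun i => ∫ x, F x ∂μ i) l (𝓝 (∫ x, F x ∂μ0)) := by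
  have hsplit : ∀ (ν : Measure X) [IsFiniteMeasureOnCompacts ν], ∫ x, F x ∂ν =
      ((∫ x, RCLike.re (F x) ∂ν : ℝ) : 𝕜) + ((∫ x, RCLike.im (F x) ∂ν : ℝ) : 𝕜) * RCLike.I :=
    fun ν _ => (integral_re_add_im (hF.integrable_of_hasCompactSupport hFs)).symm
  simp only [hsplit]
  have hre := hμ _ (RCLike.continuous_re.comp hF) (hFs.comp_left RCLike.zero_re)
  have him := hμ _ (RCLike.continuous_im.comp hF) (hFs.comp_left RCLike.zero_im)
  exact ((RCLike.continuous_ofReal.tendsto _).comp hre).add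
    (((RCLike.continuous_ofReal.tendsto _).comp him).mul_const _)

end Vague

section TensorProducts

variable {X Y : Type*} [TopologicalSpace X] [TopologicalSpace Y]

theorem HasCompactSupport.mul_prod {R : Type*} [MulZeroClass R] [TopologicalSpace R]
    {f : X → R} {g : Y → R} (hf : HasCompactSupport f) (hg : HasCompactSupport g) :
    HasCompactSupport (fun p : X × Y => f p.1 * g p.2) := by
  refine (hf.prod hg).of_isClosed_subset (isClosed_tsupport _) (closure_minimal ?_
    ((isClosed_tsupport f).prod (isClosed_tsupport g)))
  intro p hp
  exact ⟨subset_tsupport _ (left_ne_zero_of_mul hp), subset_tsupport _ (right_ne_zero_of_mul hp)⟩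

variable (X Y) in
def tensorProducts : Submonoid C(X × Y, ℝ) where
  carrier := {F | ∃ (f : C(X, ℝ)) (k : C(Y, ℝ)), F = f.comp .fst * k.comp .snd}
  mul_mem' := by
    rintro _ _ ⟨f, k, rfl⟩ ⟨f', k', rfl⟩
    exact ⟨f * f', k * k', by
      ext; simp only [ContinuousMap.mul_apply, ContinuousMap.comp_apply]; ring⟩
  one_mem' := ⟨1, 1, by ext; simp⟩

theorem separatesPoints_adjoin_tensorProducts [T35Space X] [T35Space Y] :
    (Algebra.adjoin ℝ (tensorProducts X Y : Set C(X × Y, ℝ))).SeparatesPoints := by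
  intro p q hpq
  by_cases h1 : p.1 = q.1
  · have h2 : p.2 ≠ q.2 := fun h2 => hpq (Prod.ext h1 h2)
    obtain ⟨k, hk, hne⟩ := separatesPoints_continuous_of_t35Space h2
    exact ⟨_, ⟨_, Algebra.subset_adjoin ⟨1, ⟨k, hk⟩, rfl⟩, rfl⟩, by simpa using hne⟩
  · obtain ⟨f, hf, hne⟩ := separatesPoints_continuous_of_t35Space h1
    exact ⟨_, ⟨_, Algebra.subset_adjoin ⟨⟨f, hf⟩, 1, rfl⟩, rfl⟩, by simpa using hne⟩

end TensorProducts

section ProductConvergence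

variable {ι X Y : Type*} {l : Filter ι}
  [TopologicalSpace X] [MeasurableSpace X] [OpensMeasurableSpace X]
  [TopologicalSpace Y] [MeasurableSpace Y] [OpensMeasurableSpace Y]
  [SecondCountableTopologyEither X Y]
  {μ : ι → Measure X} {μ0 : Measure X} {ν : ι → Measure Y} {ν0 : Measure Y}
  [∀ i, IsFiniteMeasure (μ i)] [IsFiniteMeasure μ0]
  [∀ i, IsFiniteMeasure (ν i)] [IsFiniteMeasure ν0]

theorem TendstoVaguely.tendsto_integral_mul_tensor (hμ : TendstoVaguely μ l μ0)
    (hν : TendstoVaguely ν l ν0) {χX : X → ℝ} {χY : Y → ℝ} (hχX : Continuous χX)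
    (hχXs : HasCompactSupport χX) (hχY : Continuous χY) (hχYs : HasCompactSupport χY)
    {G : C(X × Y, ℝ)} (hG : G ∈ Algebra.adjoin ℝ (tensorProducts X Y : Set C(X × Y, ℝ))) :
    Tendsto (fun i => ∫ p, G p * (χX p.1 * χY p.2) ∂(μ i).prod (ν i)) l
      (𝓝 (∫ p, G p * (χX p.1 * χY p.2) ∂μ0.prod ν0)) := by
  replace hG : G ∈ Submodule.span ℝ (tensorProducts X Y : Set C(X × Y, ℝ)) := by
    rwa [← Submonoid.closure_eq (tensorProducts X Y), ← Algebra.adjoin_eq_span]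
  have hint : ∀ (H : C(X × Y, ℝ)) (μ' : Measure X) (ν' : Measure Y) [IsFiniteMeasure μ']
      [IsFiniteMeasure ν'], Integrable (fun p => H p * (χX p.1 * χY p.2)) (μ'.prod ν') :=
    fun H _ _ _ _ => (H.continuous.mul ((hχX.comp continuous_fst).mul
      (hχY.comp continuous_snd))).integrable_of_hasCompactSupport (hχXs.mul_prod hχYs).mul_left
  induction hG using Submodule.span_induction with
  | mem H hH =>
    obtain ⟨f, k, rfl⟩ := hH
    have hfactor : ∀ (μ' : Measure X) (ν' : Measure Y) [SFinite μ'] [SFinite ν'],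
        ∫ p, (f.comp .fst * k.comp .snd : C(X × Y, ℝ)) p * (χX p.1 * χY p.2) ∂μ'.prod ν' =
          (∫ x, f x * χX x ∂μ') * ∫ y, k y * χY y ∂ν' := by
      intro μ' ν' _ _
      rw [← integral_prod_mul]
      congr 1 with p
      show f p.1 * k p.2 * _ = _
      ring
    simp only [hfactor]
    exact (hμ _ (f.continuous.mul hχX) hχXs.mul_left).mul
      (hν _ (k.continuous.mul hχY) hχYs.mul_left)
  | zero => simpa using tendsto_const_nhds
  | add H H' _ _ ihH ihH' =>
    have hsplit : ∀ (μ' : Measure X) (ν' : Measure Y) [IsFiniteMeasure μ'] [IsFiniteMeasure ν'],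
        ∫ p, (H + H') p * (χX p.1 * χY p.2) ∂μ'.prod ν' =
          ∫ p, H p * (χX p.1 * χY p.2) ∂μ'.prod ν' +
            ∫ p, H' p * (χX p.1 * χY p.2) ∂μ'.prod ν' := by
      intro μ' ν' _ _
      simp only [ContinuousMap.add_apply, add_mul]
      exact integral_add (hint H μ' ν') (hint H' μ' ν')
    simp only [hsplit]
    exact ihH.add ihH'
  | smul a H _ ih =>
    simp only [ContinuousMap.smul_apply, smul_eq_mul, mul_assoc, integral_const_mul]
    exact ih.const_mul a

theorem TendstoVaguely.prod [T35Space X] [LocallyCompactSpace X] [T35Space Y]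
    [LocallyCompactSpace Y] (hμ : TendstoVaguely μ l μ0) (hν : TendstoVaguely ν l ν0) :
    TendstoVaguely (fun i => (μ i).prod (ν i)) l (μ0.prod ν0) := by
  intro F hF hFs
  obtain ⟨χX, hχX1, -, hχXs, hχX01⟩ := exists_continuous_one_zero_of_isCompact
    (hFs.image continuous_fst) isClosed_empty (disjoint_empty _)
  obtain ⟨χY, hχY1, -, hχYs, hχY01⟩ := exists_continuous_one_zero_of_isCompact
    (hFs.image continuous_snd) isClosed_empty (disjoint_empty _)
  set χ : X × Y → ℝ := fun p => χX p.1 * χY p.2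
  have hχc : Continuous χ :=
    (χX.continuous.comp continuous_fst).mul (χY.continuous.comp continuous_snd)
  have hχs : HasCompactSupport χ := hχXs.mul_prod hχYs
  have hχ0 : ∀ p, 0 ≤ χ p := fun p => mul_nonneg (hχX01 p.1).1 (hχY01 p.2).1
  have hFχ : ∀ p, F p = F p * χ p := by
    intro p
    by_cases hp : F p = 0
    · simp [hp]
    · have hpF : p ∈ tsupport F := subset_tsupport F hp
      simp [χ, hχX1 (mem_image_of_mem _ hpF), hχY1 (mem_image_of_mem _ hpF)]
  have hχlim : Tendsto (fun i => ∫ p, χ p ∂(μ i).prod (ν i)) l (𝓝 (∫ p, χ p ∂μ0.prod ν0)) := by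
    simpa using hμ.tendsto_integral_mul_tensor hν χX.continuous hχXs χY.continuous hχYs
      (Subalgebra.one_mem _)
  refine tendsto_of_forall_approx (c := ∫ p, χ p ∂μ0.prod ν0) hχlim.isBoundedUnder_le
    fun ε hε => ?_
  obtain ⟨G, hGA, hGF⟩ :=
    ContinuousMap.exists_mem_subalgebra_near_continuous_of_isCompact_of_separatesPoints
      separatesPoints_adjoin_tensorProducts ⟨F, hF⟩ hχs hε
  have hbound : ∀ p, ‖F p - G p * χ p‖ ≤ ε * χ p := by
    intro p
    rw [hFχ p, ← sub_mul, norm_mul, Real.norm_of_nonneg (hχ0 p)]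
    by_cases hp : p ∈ tsupport χ
    · rw [norm_sub_rev]
      exact mul_le_mul_of_nonneg_right (hGF p hp).le (hχ0 p)
    · simp [image_eq_zero_of_notMem_tsupport hp]
  have hdist : ∀ (μ' : Measure X) (ν' : Measure Y) [IsFiniteMeasure μ'] [IsFiniteMeasure ν'],
      dist (∫ p, F p ∂μ'.prod ν') (∫ p, G p * χ p ∂μ'.prod ν') ≤ ε * ∫ p, χ p ∂μ'.prod ν' :=
    fun _ _ _ _ => dist_integral_le_of_norm_sub_le (hF.integrable_of_hasCompactSupport hFs)
      ((G.continuous.mul hχc).integrable_of_hasCompactSupport hχs.mul_left)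
      (hχc.integrable_of_hasCompactSupport hχs) hbound
  exact ⟨_, _, hμ.tendsto_integral_mul_tensor hν χX.continuous hχXs χY.continuous hχYs hGA,
    fun i => hdist (μ i) (ν i), hdist μ0 ν0⟩

end ProductConvergence

theorem tendsto_integral_of_tendsto_cocompact {ι X E : Type*} {l : Filter ι}
    [TopologicalSpace X] [RegularSpace X] [LocallyCompactSpace X] [MeasurableSpace X]
    [OpensMeasurableSpace X] [NormedAddCommGroup E] [NormedSpace ℝ E]
    [SecondCountableTopologyEither X E] {μ : ι → Measure X} {μ0 : Measure X}
    [∀ i, IsFiniteMeasure (μ i)] [IsFiniteMeasure μ0]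
    (hmass : IsBoundedUnder (· ≤ ·) l fun i => (μ i).real univ)
    (hμ : ∀ F : X → E, Continuous F → HasCompactSupport F →
      Tendsto (fun i => ∫ x, F x ∂μ i) l (𝓝 (∫ x, F x ∂μ0)))
    {F : X → E} (hF : Continuous F) (hF0 : Tendsto F (cocompact X) (𝓝 0)) :
    Tendsto (fun i => ∫ x, F x ∂μ i) l (𝓝 (∫ x, F x ∂μ0)) := by
  obtain ⟨M, hM⟩ := isBounded_iff_forall_norm_le.1
    (hF.isBounded_range_iff_isBigO.2 (hF0.isBigO_one (F := ℝ)))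
  have hFint : ∀ (ν : Measure X) [IsFiniteMeasure ν], Integrable F ν := fun ν _ =>
    Integrable.of_bound hF.aestronglyMeasurable M (ae_of_all _ fun x => hM _ (mem_range_self x))
  refine tendsto_of_forall_approx (c := μ0.real univ) hmass fun ε hε => ?_
  obtain ⟨K, hK, hKF⟩ :=
    mem_cocompact.1 (hF0.eventually (Metric.closedBall_mem_nhds (0 : E) hε))
  obtain ⟨χ, hχ1, -, hχs, hχ01⟩ :=
    exists_continuous_one_zero_of_isCompact hK isClosed_empty (disjoint_empty _)
  have hbound : ∀ x, ‖F x - χ x • F x‖ ≤ ε * 1 := by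
    intro x
    rw [show F x - χ x • F x = (1 - χ x) • F x by rw [sub_smul, one_smul], norm_smul, mul_one]
    by_cases hx : x ∈ K
    · simp [hχ1 hx, hε.le]
    · have h1 : ‖1 - χ x‖ ≤ 1 := by
        rw [Real.norm_of_nonneg (sub_nonneg.2 (hχ01 x).2)]
        linarith [(hχ01 x).1]
      simpa using mul_le_mul h1 (by simpa using hKF hx) (norm_nonneg _) zero_le_one
  have hχF : Continuous fun x => χ x • F x := χ.continuous.smul hF
  have hdist : ∀ (ν : Measure X) [IsFiniteMeasure ν],
      dist (∫ x, F x ∂ν) (∫ x, χ x • F x ∂ν) ≤ ε * ν.real univ := fun ν _ => by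
    simpa using dist_integral_le_of_norm_sub_le (hFint ν)
      (hχF.integrable_of_hasCompactSupport hχs.smul_right) (integrable_const 1) hbound
  exact ⟨_, _, hμ _ hχF hχs.smul_right, fun i => hdist (μ i), hdist μ0⟩

section DifferenceQuotient

variable {𝕜 : Type*} [NontriviallyNormedField 𝕜] {h : 𝕜 → 𝕜} {g : 𝕜 × 𝕜 → 𝕜}

theorem diffQuot_eq_zero_of_notMem_tsupport (hg : Continuous g)
    (hgq : ∀ x y, x ≠ y → g (x, y) = (h x - h y) / (x - y)) {x y : 𝕜}
    (hx : x ∉ tsupport h) (hy : y ∉ tsupport h) : g (x, y) = 0 := by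
  obtain rfl | hxy := eq_or_ne x y
  · have hlim : Tendsto (fun y => g (x, y)) (𝓝[≠] x) (𝓝 (g (x, x))) :=
      ((hg.comp (Continuous.prodMk_right x)).tendsto x).mono_left nhdsWithin_le_nhds
    have hzero : (fun y => g (x, y)) =ᶠ[𝓝[≠] x] fun _ => 0 := by
      filter_upwards [self_mem_nhdsWithin,
        nhdsWithin_le_nhds ((isClosed_tsupport h).isOpen_compl.mem_nhds hx)] with y hne hy
      rw [hgq x y (Ne.symm hne), image_eq_zero_of_notMem_tsupport hx,
        image_eq_zero_of_notMem_tsupport hy, sub_zero, zero_div]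
    exact tendsto_nhds_unique hlim (tendsto_const_nhds.congr' hzero.symm)
  · rw [hgq x y hxy, image_eq_zero_of_notMem_tsupport hx, image_eq_zero_of_notMem_tsupport hy,
      sub_zero, zero_div]

theorem norm_diffQuot_le (hg : Continuous g)
    (hgq : ∀ x y, x ≠ y → g (x, y) = (h x - h y) / (x - y)) {r C : ℝ}
    (hr : ∀ z ∈ tsupport h, ‖z‖ ≤ r) (hC : ∀ z, ‖h z‖ ≤ C) {p : 𝕜 × 𝕜} (hp : r < ‖p‖) :
    ‖g p‖ ≤ 2 * C / (‖p‖ - r) := by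
  obtain ⟨x, y⟩ := p
  have hpos : 0 < ‖(x, y)‖ - r := sub_pos.2 hp
  by_cases hout : x ∉ tsupport h ∧ y ∉ tsupport h
  · rw [diffQuot_eq_zero_of_notMem_tsupport hg hgq hout.1 hout.2, norm_zero]
    exact div_nonneg (mul_nonneg zero_le_two ((norm_nonneg _).trans (hC 0))) hpos.le
  have hgap : ‖(x, y)‖ - r ≤ ‖x - y‖ := by
    rw [Prod.norm_mk, sub_le_iff_le_add]
    have hxy := norm_sub_norm_le x y
    have hyx := norm_sub_norm_le y x
    rw [norm_sub_rev y x] at hyx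
    rcases not_and_or.1 hout with hx | hy
    · have := hr x (not_not.1 hx)
      exact max_le (by linarith [norm_nonneg (x - y)]) (by linarith)
    · have := hr y (not_not.1 hy)
      exact max_le (by linarith) (by linarith [norm_nonneg (x - y)])
  rw [hgq x y (sub_ne_zero.1 (norm_pos_iff.1 (hpos.trans_le hgap))), norm_div]
  exact div_le_div₀ (mul_nonneg zero_le_two ((norm_nonneg _).trans (hC 0)))
    ((norm_sub_le _ _).trans (by linarith [hC x, hC y])) hpos hgap

theorem tendsto_cocompact_diffQuot [ProperSpace 𝕜] (hh : Continuous h)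
    (hs : HasCompactSupport h) (hg : Continuous g)
    (hgq : ∀ x y, x ≠ y → g (x, y) = (h x - h y) / (x - y)) :
    Tendsto g (cocompact (𝕜 × 𝕜)) (𝓝 0) := by
  obtain ⟨C, hC⟩ := hh.bounded_above_of_compact_support hs
  obtain ⟨r, hr⟩ := hs.isBounded.subset_closedBall 0
  have hnorm : Tendsto (fun p : 𝕜 × 𝕜 => ‖p‖ - r) (cocompact _) atTop :=
    tendsto_atTop_add_const_right _ (-r) tendsto_norm_cocompact_atTop
  refine squeeze_zero_norm' ?_ ((tendsto_const_nhds (x := 2 * C)).div_atTop hnorm)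
  filter_upwards [hnorm.eventually_gt_atTop 0] with p hp
  exact norm_diffQuot_le hg hgq (fun z hz => mem_closedBall_zero_iff.1 (hr hz)) hC
    (sub_pos.1 hp)

end DifferenceQuotient

theorem double_integral_difference_quotient_convergence_general
    (μn : ℕ → Measure ℂ) (μ0 : Measure ℂ)
    [∀ n, IsProbabilityMeasure (μn n)] [IsFiniteMeasure μ0]
    (hconv : ∀ f : ℂ → ℝ, Continuous f → HasCompactSupport f →
      Tendsto (fun n => ∫ x, f x ∂(μn n)) atTop (𝓝 (∫ x, f x ∂μ0)))
    (h : ℂ → ℂ) (hC2 : ContDiff ℝ 2 h) (hsupp : HasCompactSupport h)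
    (g : ℂ × ℂ → ℂ) (hgcont : Continuous g)
    (hgq : ∀ x y : ℂ, x ≠ y → g (x, y) = (h x - h y) / (x - y)) :
    Tendsto (fun n => ∫ p, g p ∂((μn n).prod (μn n))) atTop
      (𝓝 (∫ p, g p ∂(μ0.prod μ0))) := by
  have hprod : TendstoVaguely (fun n => (μn n).prod (μn n)) atTop (μ0.prod μ0) :=
    TendstoVaguely.prod hconv hconv
  have hmass : IsBoundedUnder (· ≤ ·) atTop fun n => ((μn n).prod (μn n)).real univ :=
    isBoundedUnder_of ⟨1, fun n => by simp⟩
  exact tendsto_integral_of_tendsto_cocompact hmass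
    (fun F hF hFs => hprod.tendsto_integral_rclike hF hFs) hgcont
    (tendsto_cocompact_diffQuot hC2.continuous hsupp hgcont hgq)

/-- If Borel probability measures `μₙ` converge vaguely to a finite Borel measure `μ₀`
and `h` is `C²` with compact support, then for the bounded continuous extension `g` of
the difference quotient `(h(x)−h(y))/(x−y)`, the double integrals
`∬ g dμₙ dμₙ` converge to `∬ g dμ₀ dμ₀`. -/
theorem double_integral_difference_quotient_convergence
    (μn : ℕ → Measure ℂ) (μ0 : Measure ℂ)
    [∀ n, IsProbabilityMeasure (μn n)] [IsFiniteMeasure μ0]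
    (hconv : ∀ f : ℂ → ℝ, Continuous f → HasCompactSupport f →
      Tendsto (fun n => ∫ x, f x ∂(μn n)) atTop (𝓝 (∫ x, f x ∂μ0)))
    (h : ℂ → ℂ) (hC2 : ContDiff ℝ 2 h) (hsupp : HasCompactSupport h)
    (g : ℂ × ℂ → ℂ) (hgcont : Continuous g)
    (hgbd : ∃ M : ℝ, ∀ p : ℂ × ℂ, ‖g p‖ ≤ M)
    (hgq : ∀ x y : ℂ, x ≠ y → g (x, y) = (h x - h y) / (x - y)) :
    Tendsto (fun n => ∫ p, g p ∂((μn n).prod (μn n))) atTop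
      (𝓝 (∫ p, g p ∂(μ0.prod μ0))) :=
  double_integral_difference_quotient_convergence_general μn μ0 hconv h hC2 hsupp g hgcont hgq
end
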